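/- There exists a 2-factorization of the graph K_24 − I (the complete graph on 24 vertices minus a perfect matching I) having exactly 5 triangle-factors and 6 quadrangle-factors; i.e., the Hamilton–Waterloo problem HWP(24; 3, 4; 5, 6) has a solution. -/

import Mathlib

/-!
The removed matching and all eleven factors are functional graphs of explicit maps `f` of
`Fin 24`, joining each `x` to `f x`. If every point has minimal period `n` under `f`, the
connected component of `x` is its orbit, with `n` points, and the neighbours of `x` are `f x`
and its preimage `f^[n - 1] x`, which are distinct when `n ≥ 3` and equal when `n = 2`. So it
suffices that the matching has period 2, the five triangle-factors period 3 and the six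
quadrangle-factors period 4, and that the factors avoid the matching and cover every other
edge exactly once; these are finite checks.
-/

/-- `H` is a 2-factor of the simple graph `G`: a spanning 2-regular subgraph of `G`
(every vertex has exactly two neighbours in `H`). -/
def IsTwoFactor {V : Type*} (G H : SimpleGraph V) : Prop :=
  H ≤ G ∧ ∀ v : V, (H.neighborSet v).ncard = 2

/-- `H` is a 2-factor of `G` all of whose connected components are cycles of length `n`:
since `H` is 2-regular, this is equivalent to requiring that every connected component
of `H` has exactly `n` vertices. For `n = 3` this is a triangle-factor, for `n = 4` a
quadrangle-factor. -/
def IsCycleFactor {V : Type*} (G H : SimpleGraph V) (n : ℕ) : Prop :=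
  IsTwoFactor G H ∧ ∀ v : V, (H.connectedComponentMk v).supp.ncard = n

/-- `F` is a solution of the Hamilton--Waterloo problem HWP on the graph `G` with `r`
triangle-factors and `s` quadrangle-factors: the `r + s` factors `F i` are 2-factors of `G`
whose edge sets partition the edge set of `G` (every edge of `G` lies in exactly one factor),
the first `r` of them being triangle-factors and the remaining `s` quadrangle-factors. -/
def IsHWPSolution {V : Type*} (G : SimpleGraph V) (r s : ℕ)
    (F : Fin (r + s) → SimpleGraph V) : Prop :=
  (∀ i : Fin (r + s), (i : ℕ) < r → IsCycleFactor G (F i) 3) ∧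
  (∀ i : Fin (r + s), r ≤ (i : ℕ) → IsCycleFactor G (F i) 4) ∧
  (∀ e : Sym2 V, e ∈ G.edgeSet → ∃! i : Fin (r + s), e ∈ (F i).edgeSet)

open Function SimpleGraph

section Dynamics

variable {V : Type*} {f : V → V}

theorem exists_iterate_eq_of_iterate_eq {x y : V} (hx : x ∈ periodicPts f) {k : ℕ}
    (hk : f^[k] x = y) : ∃ j, f^[j] y = x := by
  refine ⟨(minimalPeriod f x - 1) * k, ?_⟩
  have hp := minimalPeriod_pos_of_mem_periodicPts hx
  rw [← hk, ← iterate_add_apply, ← Nat.succ_mul, Nat.succ_eq_add_one, Nat.sub_add_cancel hp]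
  exact (isPeriodicPt_minimalPeriod f x).mul_const k

theorem ncard_range_iterate {x : V} (hx : x ∈ periodicPts f) :
    (Set.range (f^[·] x)).ncard = minimalPeriod f x := by
  have hrange : Set.range (f^[·] x) = (f^[·] x) '' Set.Iio (minimalPeriod f x) := by
    refine (Set.image_subset_range _ _).antisymm' ?_
    rintro _ ⟨k, rfl⟩
    exact ⟨k % minimalPeriod f x, Nat.mod_lt _ (minimalPeriod_pos_of_mem_periodicPts hx),
      iterate_mod_minimalPeriod_eq⟩
  rw [hrange, iterate_injOn_Iio_minimalPeriod.ncard_image, Set.ncard_Iio_nat]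

theorem mem_periodicPts_of_minimalPeriod_eq {n : ℕ} (hn : 0 < n)
    (hf : ∀ x, minimalPeriod f x = n) (x : V) : x ∈ periodicPts f :=
  minimalPeriod_pos_iff_mem_periodicPts.mp (hf x ▸ hn)

theorem minimalPeriod_eq_of_iterate_eq {x : V} {n : ℕ} (hn : 0 < n) (hfix : f^[n] x = x)
    (hmin : ∀ k < n, 0 < k → f^[k] x ≠ x) : minimalPeriod f x = n := by
  have hle : minimalPeriod f x ≤ n := IsPeriodicPt.minimalPeriod_le hn hfix
  by_contra hne
  exact hmin _ (by omega) (IsPeriodicPt.minimalPeriod_pos hn hfix) iterate_minimalPeriod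

theorem apply_eq_iff_eq_iterate_pred (hf : ∀ x, x ∈ periodicPts f) {x y : V} :
    f y = x ↔ y = f^[minimalPeriod f x - 1] x := by
  have hp := minimalPeriod_pos_of_mem_periodicPts (hf x)
  constructor
  · intro hy
    -- Mod the period `p`, `y = f^[j] x` with `j < p`, and `f^[j + 1] x = x` forces `j + 1 = p`.
    obtain ⟨j, hj⟩ := exists_iterate_eq_of_iterate_eq (hf y) (k := 1) hy
    rw [← iterate_mod_minimalPeriod_eq] at hj
    have hper : IsPeriodicPt f (j % minimalPeriod f x + 1) x := by
      rw [IsPeriodicPt, IsFixedPt, iterate_succ_apply', hj, hy]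
    have hle := hper.minimalPeriod_le (Nat.succ_pos _)
    have hlt := Nat.mod_lt j hp
    rw [← hj]
    congr 1
    omega
  · rintro rfl
    rw [← iterate_succ_apply' f, Nat.succ_eq_add_one, Nat.sub_add_cancel hp,
      iterate_minimalPeriod]

end Dynamics

section FunctionalGraph

variable {V : Type*}

def functionalGraph (f : V → V) : SimpleGraph V :=
  SimpleGraph.fromRel fun x y => f x = y

instance [DecidableEq V] (f : V → V) : DecidableRel (functionalGraph f).Adj :=
  inferInstanceAs (DecidableRel (SimpleGraph.fromRel fun x y => f x = y).Adj)

variable {f : V → V}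

theorem functionalGraph_adj {x y : V} :
    (functionalGraph f).Adj x y ↔ x ≠ y ∧ (f x = y ∨ f y = x) :=
  fromRel_adj _ x y

theorem reachable_functionalGraph_iterate (x : V) (k : ℕ) :
    (functionalGraph f).Reachable x (f^[k] x) := by
  induction k with
  | zero => rfl
  | succ k ih =>
    rw [iterate_succ_apply']
    refine ih.trans ?_
    by_cases h : f^[k] x = f (f^[k] x)
    · rw [← h]
    · exact (functionalGraph_adj.mpr ⟨h, Or.inl rfl⟩).reachable

theorem reachable_functionalGraph_iff (hf : ∀ x, x ∈ periodicPts f) {x y : V} :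
    (functionalGraph f).Reachable x y ↔ ∃ k, f^[k] x = y := by
  refine ⟨?_, fun ⟨k, hk⟩ => hk ▸ reachable_functionalGraph_iterate x k⟩
  rintro ⟨w⟩
  induction w with
  | nil => exact ⟨0, rfl⟩
  | @cons a b _ hab _ ih =>
    obtain ⟨k, hk⟩ := ih
    have hstep : ∃ j, f^[j] a = b := by
      rcases (functionalGraph_adj.mp hab).2 with h | h
      · exact ⟨1, h⟩
      · exact exists_iterate_eq_of_iterate_eq (hf b) (k := 1) h
    obtain ⟨j, rfl⟩ := hstep
    exact ⟨k + j, by rw [iterate_add_apply, hk]⟩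

theorem supp_connectedComponentMk_functionalGraph (hf : ∀ x, x ∈ periodicPts f) (x : V) :
    ((functionalGraph f).connectedComponentMk x).supp = Set.range (f^[·] x) := by
  ext y
  rw [ConnectedComponent.mem_supp_iff, ConnectedComponent.eq, reachable_comm,
    reachable_functionalGraph_iff hf, Set.mem_range]

theorem neighborSet_functionalGraph (hf : ∀ x, x ∈ periodicPts f) (x : V) :
    (functionalGraph f).neighborSet x = {f x, f^[minimalPeriod f x - 1] x} \ {x} := by
  ext y
  rw [mem_neighborSet, functionalGraph_adj,
    apply_eq_iff_eq_iterate_pred hf (x := x) (y := y)]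
  simp only [Set.mem_sdiff, Set.mem_insert_iff, Set.mem_singleton_iff]
  tauto

theorem ncard_neighborSet_functionalGraph_of_minimalPeriod_eq_two
    (hf : ∀ x, minimalPeriod f x = 2) (x : V) :
    ((functionalGraph f).neighborSet x).ncard = 1 := by
  have hfix : f x ≠ x := fun h => by
    have := minimalPeriod_eq_one_iff_isFixedPt.mpr h
    rw [hf x] at this
    omega
  rw [neighborSet_functionalGraph (mem_periodicPts_of_minimalPeriod_eq two_pos hf), hf x,
    iterate_one, Set.pair_eq_singleton, Set.sdiff_singleton_eq_self (by simpa using hfix.symm),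
    Set.ncard_singleton]

theorem ncard_neighborSet_functionalGraph_of_three_le_minimalPeriod
    (hf : ∀ x, x ∈ periodicPts f) {x : V} (hx : 3 ≤ minimalPeriod f x) :
    ((functionalGraph f).neighborSet x).ncard = 2 := by
  have hne {m n : ℕ} (hm : m < minimalPeriod f x) (hn : n < minimalPeriod f x) (hmn : m ≠ n) :
      f^[m] x ≠ f^[n] x :=
    fun h => hmn ((iterate_eq_iterate_iff_of_lt_minimalPeriod hm hn).mp h)
  have h1 : f x ≠ x := hne (m := 1) (n := 0) (by omega) (by omega) (by omega)
  have h2 : f^[minimalPeriod f x - 1] x ≠ x := hne (n := 0) (by omega) (by omega) (by omega)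
  have h12 : f x ≠ f^[minimalPeriod f x - 1] x := hne (m := 1) (by omega) (by omega) (by omega)
  rw [neighborSet_functionalGraph hf, Set.sdiff_singleton_eq_self (by simp [h1.symm, h2.symm]),
    Set.ncard_pair h12]

theorem isCycleFactor_functionalGraph {G : SimpleGraph V} {n : ℕ} (hn : 3 ≤ n)
    (hf : ∀ x, minimalPeriod f x = n) (hG : functionalGraph f ≤ G) :
    IsCycleFactor G (functionalGraph f) n := by
  have hper := mem_periodicPts_of_minimalPeriod_eq (by omega) hf
  refine ⟨⟨hG, fun x => ?_⟩, fun x => ?_⟩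
  · exact ncard_neighborSet_functionalGraph_of_three_le_minimalPeriod hper (hf x ▸ hn)
  · rw [supp_connectedComponentMk_functionalGraph hper, ncard_range_iterate (hper x), hf x]

end FunctionalGraph

namespace HWP24

def matching : Fin 24 → Fin 24 :=
  ![4, 5, 6, 7, 0, 1, 2, 3, 12, 13, 14, 15, 8, 9, 10, 11, 20, 21, 22, 23, 16, 17, 18, 19]

def factorSucc : Fin 11 → Fin 24 → Fin 24 := ![
  ![8, 9, 10, 11, 12, 13, 14, 15, 16, 17, 18, 19, 20, 21, 22, 23, 0, 1, 2, 3, 4, 5, 6, 7],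
  ![9, 10, 11, 12, 13, 14, 15, 8, 17, 18, 19, 20, 21, 22, 23, 16, 6, 7, 0, 1, 2, 3, 4, 5],
  ![10, 11, 12, 13, 14, 15, 8, 9, 18, 19, 20, 21, 22, 23, 16, 17, 4, 5, 6, 7, 0, 1, 2, 3],
  ![11, 12, 13, 14, 15, 8, 9, 10, 22, 23, 16, 17, 18, 19, 20, 21, 7, 0, 1, 2, 3, 4, 5, 6],
  ![12, 13, 14, 15, 8, 9, 10, 11, 23, 16, 17, 18, 19, 20, 21, 22, 5, 6, 7, 0, 1, 2, 3, 4],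
  ![1, 3, 0, 2, 5, 7, 4, 6, 9, 11, 8, 10, 13, 15, 12, 14, 17, 19, 16, 18, 21, 23, 20, 22],
  ![3, 2, 7, 6, 1, 0, 5, 4, 11, 10, 15, 14, 9, 8, 13, 12, 19, 18, 23, 22, 17, 16, 21, 20],
  ![6, 7, 4, 5, 3, 2, 1, 0, 14, 15, 12, 13, 11, 10, 9, 8, 22, 23, 20, 21, 19, 18, 17, 16],
  ![15, 23, 8, 16, 11, 12, 19, 20, 3, 21, 22, 6, 7, 17, 18, 1, 2, 14, 13, 4, 5, 10, 9, 0],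
  ![13, 16, 17, 9, 10, 18, 20, 14, 21, 4, 3, 22, 23, 7, 0, 19, 11, 12, 15, 5, 8, 6, 1, 2],
  ![21, 8, 9, 17, 18, 10, 12, 22, 19, 20, 23, 5, 16, 6, 1, 2, 13, 4, 3, 14, 15, 7, 0, 11]]

theorem matching_iterate :
    ∀ x, matching^[2] x = x ∧ ∀ k < 2, 0 < k → matching^[k] x ≠ x := by
  decide

theorem factorSucc_iterate_of_lt (i : Fin 11) (hi : (i : ℕ) < 5) :
    ∀ x, (factorSucc i)^[3] x = x ∧ ∀ k < 3, 0 < k → (factorSucc i)^[k] x ≠ x := by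
  revert i; decide

theorem factorSucc_iterate_of_le (i : Fin 11) (hi : 5 ≤ (i : ℕ)) :
    ∀ x, (factorSucc i)^[4] x = x ∧ ∀ k < 4, 0 < k → (factorSucc i)^[k] x ≠ x := by
  revert i; decide

theorem not_adj_matching_of_adj_factorSucc (i : Fin 11) (x y : Fin 24)
    (h : (functionalGraph (factorSucc i)).Adj x y) : ¬ (functionalGraph matching).Adj x y := by
  revert i x y; decide

theorem existsUnique_adj_factorSucc (x y : Fin 24) (hxy : x ≠ y)
    (hM : ¬ (functionalGraph matching).Adj x y) :
    ∃! i, (functionalGraph (factorSucc i)).Adj x y := by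
  revert x y; unfold ExistsUnique; decide

end HWP24

open HWP24

/-- HWP(24; 3, 4; 5, 6) has a solution: the complete graph `K_24` minus a perfect matching
`I` admits a 2-factorization with exactly 5 triangle-factors and 6 quadrangle-factors. -/
theorem hwp24_5_6 :
    ∃ M : SimpleGraph (Fin 24), (∀ v : Fin 24, (M.neighborSet v).ncard = 1) ∧
      ∃ F : Fin (5 + 6) → SimpleGraph (Fin 24),
        IsHWPSolution ((⊤ : SimpleGraph (Fin 24)) \ M) 5 6 F := by
  have hM (x : Fin 24) : minimalPeriod matching x = 2 :=
    minimalPeriod_eq_of_iterate_eq two_pos (matching_iterate x).1 (matching_iterate x).2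
  have hle (i : Fin 11) : functionalGraph (factorSucc i) ≤ ⊤ \ functionalGraph matching :=
    fun x y h => ⟨h.ne, not_adj_matching_of_adj_factorSucc i x y h⟩
  refine ⟨functionalGraph matching, ncard_neighborSet_functionalGraph_of_minimalPeriod_eq_two hM,
    fun i => functionalGraph (factorSucc i), fun i hi => ?_, fun i hi => ?_, ?_⟩
  · have h := factorSucc_iterate_of_lt i hi
    exact isCycleFactor_functionalGraph le_rfl
      (fun x => minimalPeriod_eq_of_iterate_eq three_pos (h x).1 (h x).2) (hle i)
  · have h := factorSucc_iterate_of_le i hi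
    exact isCycleFactor_functionalGraph (by norm_num)
      (fun x => minimalPeriod_eq_of_iterate_eq four_pos (h x).1 (h x).2) (hle i)
  · refine Sym2.ind fun x y hxy => ?_
    obtain ⟨hne, hM⟩ := (sdiff_adj ..).mp hxy
    exact existsUnique_adj_factorSucc x y hne hM
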